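/- arXiv:1903.03222 — 4 statements merged into one kernel-verified Lean document; each statement's English description precedes it below -/
import Mathlib

section
/- Let f(x) = x(x-1)(x-λ) ∈ ℚ[λ][x] and define polynomials P_k by the seed P_0 = (1/2)·f' and the recurrence P_{k+1} = P_k'·f + (1/2 - k)·P_k·f' for k ≥ 0 (derivatives in x). Then for every k ≥ 0, the degree of P_k in x equals 2(k+1). -/
open MvPolynomial

/-- `f(x) = x(x-1)(x-λ)`, with `X 0 = x` and `X 1 = λ`. -/
noncomputable def legendreF : MvPolynomial (Fin 2) ℚ :=
  X 0 * (X 0 - 1) * (X 0 - X 1)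

/-- The basic inflection polynomials `P_k = P_{1,k}`. -/
noncomputable def inflP : ℕ → MvPolynomial (Fin 2) ℚ
  | 0 => C (1/2 : ℚ) * pderiv 0 legendreF
  | k + 1 =>
      pderiv 0 (inflP k) * legendreF +
        C ((1/2 : ℚ) - (k : ℚ)) * (inflP k * pderiv 0 legendreF)

/-!
View `P_k` as a polynomial in `x` over `ℚ[λ]`. If `p` and `f` have degrees `m + 1` and
`n + 1` and leading coefficients `a` and `b`, then `p' f + c p f'` has degree at most
`m + n + 1`, with coefficient `a b (m + 1 + c (n + 1))` there. For `p = P_k` (of degree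
`2k + 2`, inductively), `f` cubic and `c = 1/2 - k` the factor is `7/2 - k`, which never
vanishes, so each step of the recurrence raises the degree by exactly two.
-/

namespace Polynomial

variable {R : Type*} [CommRing R]

theorem coeff_derivative_mul_add_C_mul_mul_derivative (p f : R[X]) (c : R) {m n : ℕ}
    (hp : p.natDegree = m + 1) (hf : f.natDegree = n + 1) :
    (derivative p * f + C c * (p * derivative f)).coeff (m + n + 1) =
      p.leadingCoeff * f.leadingCoeff * (m + 1 + c * (n + 1)) := by
  have hp' : (derivative p).natDegree ≤ m := (natDegree_derivative_le p).trans (by omega)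
  have hf' : (derivative f).natDegree ≤ n := (natDegree_derivative_le f).trans (by omega)
  rw [coeff_add, coeff_C_mul, add_assoc, coeff_mul_add_eq_of_natDegree_le hp' hf.le,
    ← add_assoc, add_right_comm, coeff_mul_add_eq_of_natDegree_le hp.le hf', coeff_derivative,
    coeff_derivative, leadingCoeff, leadingCoeff, hp, hf]
  ring

theorem natDegree_derivative_mul_add_C_mul_mul_derivative_le (p f : R[X]) (c : R) {m n : ℕ}
    (hp : p.natDegree = m + 1) (hf : f.natDegree = n + 1) :
    (derivative p * f + C c * (p * derivative f)).natDegree ≤ m + n + 1 := by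
  have hp' : (derivative p).natDegree ≤ m := (natDegree_derivative_le p).trans (by omega)
  have hf' : (derivative f).natDegree ≤ n := (natDegree_derivative_le f).trans (by omega)
  refine natDegree_add_le_of_degree_le ?_ ?_
  · exact natDegree_mul_le_of_le hp' hf.le |>.trans (by omega)
  · exact (natDegree_C_mul_le _ _).trans (natDegree_mul_le_of_le hp.le hf' |>.trans (by omega))

theorem natDegree_derivative_mul_add_C_mul_mul_derivative [IsDomain R] (p f : R[X]) (c : R)
    {m n : ℕ} (hp : p.natDegree = m + 1) (hf : f.natDegree = n + 1)
    (hc : (m + 1 : R) + c * (n + 1) ≠ 0) :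
    (derivative p * f + C c * (p * derivative f)).natDegree = m + n + 1 := by
  refine natDegree_eq_of_le_of_coeff_ne_zero
    (natDegree_derivative_mul_add_C_mul_mul_derivative_le p f c hp hf) ?_
  rw [coeff_derivative_mul_add_C_mul_mul_derivative p f c hp hf]
  have hp0 : p ≠ 0 := ne_zero_of_natDegree_gt (n := 0) (by omega)
  have hf0 : f ≠ 0 := ne_zero_of_natDegree_gt (n := 0) (by omega)
  exact mul_ne_zero (mul_ne_zero (leadingCoeff_ne_zero.2 hp0) (leadingCoeff_ne_zero.2 hf0)) hc

end Polynomial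

namespace MvPolynomial

variable {R : Type*} [CommSemiring R] {n : ℕ}

theorem finSuccEquiv_C (a : R) : finSuccEquiv R n (C a) = Polynomial.C (C a) := by
  simp [finSuccEquiv_apply]

theorem finSuccEquiv_pderiv_zero (p : MvPolynomial (Fin (n + 1)) R) :
    finSuccEquiv R n (pderiv 0 p) = Polynomial.derivative (finSuccEquiv R n p) := by
  induction p using MvPolynomial.induction_on with
  | C a => simp [finSuccEquiv_C]
  | add p q hp hq => simp [hp, hq]
  | mul_X p i hp =>
    induction i using Fin.cases with
    | zero => simp [hp, finSuccEquiv_X_zero]; ring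
    | succ j => simp [hp, finSuccEquiv_X_succ, mul_comm]

end MvPolynomial

theorem finSuccEquiv_legendreF :
    finSuccEquiv ℚ 1 legendreF =
      Polynomial.X * (Polynomial.X - 1) * (Polynomial.X - Polynomial.C (X 0)) := by
  have hlam : finSuccEquiv ℚ 1 (X 1) = Polynomial.C (X 0) := finSuccEquiv_X_succ (j := 0)
  rw [legendreF, map_mul, map_mul, map_sub, map_sub, map_one, finSuccEquiv_X_zero, hlam]

theorem natDegree_finSuccEquiv_legendreF : (finSuccEquiv ℚ 1 legendreF).natDegree = 3 := by
  rw [finSuccEquiv_legendreF]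
  compute_degree!

theorem finSuccEquiv_inflP_succ (k : ℕ) :
    finSuccEquiv ℚ 1 (inflP (k + 1)) =
      Polynomial.derivative (finSuccEquiv ℚ 1 (inflP k)) * finSuccEquiv ℚ 1 legendreF +
        Polynomial.C (C ((1/2 : ℚ) - k)) *
          (finSuccEquiv ℚ 1 (inflP k) * Polynomial.derivative (finSuccEquiv ℚ 1 legendreF)) := by
  simp only [inflP, map_add, map_mul, finSuccEquiv_pderiv_zero, finSuccEquiv_C]

theorem inflP_recurrence_factor_ne_zero (k : ℕ) :
    ((2 * k + 1 : ℕ) + 1 : MvPolynomial (Fin 1) ℚ) +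
      C (1 / 2 - k : ℚ) * (((2 : ℕ) : MvPolynomial (Fin 1) ℚ) + 1) ≠ 0 := by
  have h : (7 / 2 - k : ℚ) ≠ 0 := by
    intro h
    have : 7 = 2 * k := by exact_mod_cast (by linarith : (7 : ℚ) = 2 * k)
    omega
  rwa [show (7 / 2 - k : ℚ) = (2 * k + 1 : ℕ) + 1 + (1 / 2 - k) * ((2 : ℕ) + 1) by push_cast; ring,
    Ne, ← C_eq_zero (σ := Fin 1), map_add, map_add, map_mul, map_add, map_natCast, map_natCast,
    map_one] at h

theorem natDegree_finSuccEquiv_inflP (k : ℕ) :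
    (finSuccEquiv ℚ 1 (inflP k)).natDegree = 2 * k + 2 := by
  induction k with
  | zero =>
    rw [inflP, map_mul, finSuccEquiv_C, finSuccEquiv_pderiv_zero,
      Polynomial.natDegree_C_mul (by simp), Polynomial.natDegree_derivative,
      natDegree_finSuccEquiv_legendreF]
  | succ k ih =>
    rw [finSuccEquiv_inflP_succ]
    exact Polynomial.natDegree_derivative_mul_add_C_mul_mul_derivative _ _ _
      (m := 2 * k + 1) (n := 2) ih natDegree_finSuccEquiv_legendreF
      (inflP_recurrence_factor_ne_zero k)

theorem degree_x_inflP (k : ℕ) : degreeOf 0 (inflP k) = 2 * (k + 1) := by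
  rw [← natDegree_finSuccEquiv, natDegree_finSuccEquiv_inflP]
  ring
end

section
/- With f(x) = x(x-1)(x-λ), P_0 = (1/2)f', and P_{k+1} = P_k'·f + (1/2 - k)·P_k·f', the polynomial P_k, viewed as a polynomial in the two variables x and λ, has degree exactly k+1 in λ for every k ≥ 0. -/
open MvPolynomial

/-!
Every step of the recurrence raises the `λ`-degree by at most one, since `f` and `f'` are linear
in `λ` and `∂/∂x` does not raise it. For the lower bound restrict to the line `x = 0`: there
`f = 0` and `f' = λ`, so `P_{k+1}(0, λ) = (1/2 - k) λ P_k(0, λ)`, and the factors `1/2 - k` never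
vanish, whence `P_k(0, λ)` is a nonzero multiple of `λ^(k+1)`.
-/

namespace MvPolynomial

variable {σ R : Type*} [CommSemiring R]

theorem degreeOf_pderiv_le (i j : σ) (p : MvPolynomial σ R) :
    degreeOf i (pderiv j p) ≤ degreeOf i p := by
  refine degreeOf_le_iff.mpr fun m hm => ?_
  have hmem : m + Finsupp.single j 1 ∈ p.support := by
    rw [mem_support_iff, coeff_pderiv] at hm
    exact mem_support_iff.mpr (left_ne_zero_of_mul hm)
  calc m i ≤ (m + Finsupp.single j 1 : σ →₀ ℕ) i := by simp
    _ ≤ degreeOf i p := monomial_le_degreeOf i hmem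

theorem natDegree_aeval_monomial_le {i : σ} {g : σ → Polynomial R}
    (hi : (g i).natDegree ≤ 1) (hg : ∀ j ≠ i, (g j).natDegree = 0) (s : σ →₀ ℕ) (a : R) :
    (aeval g (monomial s a)).natDegree ≤ s i := by
  classical
  rw [aeval_monomial, Finsupp.prod]
  calc _ ≤ ∑ j ∈ s.support, (g j ^ s j).natDegree :=
        (Polynomial.natDegree_C_mul_le _ _).trans (Polynomial.natDegree_prod_le _ _)
    _ ≤ ∑ j ∈ s.support, if i = j then s j else 0 := by
        refine Finset.sum_le_sum fun j _ => Polynomial.natDegree_pow_le.trans ?_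
        split_ifs with h
        · subst h
          simpa using Nat.mul_le_mul_left (s i) hi
        · simp [hg j (Ne.symm h)]
    _ ≤ s i := by
        rw [Finset.sum_ite_eq]
        split_ifs <;> simp

theorem natDegree_aeval_le_degreeOf {i : σ} {g : σ → Polynomial R}
    (hi : (g i).natDegree ≤ 1) (hg : ∀ j ≠ i, (g j).natDegree = 0) (p : MvPolynomial σ R) :
    (aeval g p).natDegree ≤ degreeOf i p := by
  conv_lhs => rw [p.as_sum, map_sum]
  exact Polynomial.natDegree_sum_le_of_forall_le _ _ fun s hs =>
    (natDegree_aeval_monomial_le hi hg s _).trans (monomial_le_degreeOf i hs)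

end MvPolynomial

theorem half_sub_natCast_ne_zero (k : ℕ) : (1 / 2 : ℚ) - k ≠ 0 := by
  intro h
  have h2k : ((2 * k : ℕ) : ℚ) = (1 : ℕ) := by
    push_cast
    linarith
  exact absurd (Nat.cast_injective h2k) (by omega)

theorem degreeOf_one_legendreF_le : degreeOf 1 legendreF ≤ 1 := by
  have h10 : (1 : Fin 2) ≠ 0 := by decide
  unfold legendreF
  calc _ ≤ degreeOf 1 (X 0 : MvPolynomial (Fin 2) ℚ) + degreeOf 1 (X 0 - 1 : MvPolynomial (Fin 2) ℚ)
        + degreeOf 1 (X 0 - X 1 : MvPolynomial (Fin 2) ℚ) :=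
        (degreeOf_mul_le _ _ _).trans (Nat.add_le_add_right (degreeOf_mul_le _ _ _) _)
    _ ≤ 0 + max 0 0 + max 0 1 := by
        gcongr
        · exact (degreeOf_X_of_ne h10).le
        all_goals exact (degreeOf_sub_le _ _ _).trans (by simp [degreeOf_X_of_ne h10])

theorem degreeOf_one_inflP_le (k : ℕ) : degreeOf 1 (inflP k) ≤ k + 1 := by
  have hF := degreeOf_one_legendreF_le
  have hF' := (degreeOf_pderiv_le 1 0 legendreF).trans hF
  induction k with
  | zero => exact (degreeOf_C_mul_le _ _ _).trans hF'
  | succ k ih =>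
    have hP' := (degreeOf_pderiv_le 1 0 (inflP k)).trans ih
    refine (degreeOf_add_le _ _ _).trans (max_le ?_ ?_)
    · exact (degreeOf_mul_le _ _ _).trans (by omega)
    · exact (degreeOf_C_mul_le _ _ _).trans ((degreeOf_mul_le _ _ _).trans (by omega))

noncomputable def evalXZero : MvPolynomial (Fin 2) ℚ →ₐ[ℚ] Polynomial ℚ :=
  aeval ![0, Polynomial.X]

theorem natDegree_evalXZero_le (p : MvPolynomial (Fin 2) ℚ) :
    (evalXZero p).natDegree ≤ degreeOf 1 p :=
  natDegree_aeval_le_degreeOf (by simp) (fun j hj => by fin_cases j <;> simp_all) p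

theorem evalXZero_legendreF : evalXZero legendreF = 0 := by
  simp [evalXZero, legendreF]

theorem evalXZero_pderiv_legendreF : evalXZero (pderiv 0 legendreF) = Polynomial.X := by
  simp [evalXZero, legendreF]

theorem evalXZero_inflP (k : ℕ) :
    ∃ d : ℚ, d ≠ 0 ∧ evalXZero (inflP k) = Polynomial.C d * Polynomial.X ^ (k + 1) := by
  induction k with
  | zero => exact ⟨1 / 2, by norm_num, by simp [inflP, evalXZero_pderiv_legendreF]⟩
  | succ k ih =>
    obtain ⟨d, hd, hk⟩ := ih
    refine ⟨(1 / 2 - k) * d, mul_ne_zero (half_sub_natCast_ne_zero k) hd, ?_⟩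
    simp only [inflP, map_add, map_mul, evalXZero_legendreF, evalXZero_pderiv_legendreF, hk,
      mul_zero, zero_add]
    simp only [evalXZero, algHom_C, Polynomial.algebraMap_eq]
    ring

theorem degree_lambda_inflP (k : ℕ) : degreeOf 1 (inflP k) = k + 1 := by
  refine le_antisymm (degreeOf_one_inflP_le k) ?_
  obtain ⟨d, hd, hk⟩ := evalXZero_inflP k
  simpa [hk, Polynomial.natDegree_C_mul_X_pow _ _ hd] using natDegree_evalXZero_le (inflP k)
end

section
/- Define P_k(x, λ) by P_0 = (1/2)(3x² - 2(1+λ)x + λ) and the recurrence P_{k+1} = ∂_x(P_k)·f + (1/2 - k)·P_k·∂_x f with f = x(x-1)(x-λ). Let H_k(x, λ, z) be the homogenization of P_k to a homogeneous polynomial of degree 2(k+1) in (x, λ, z). Then H_k(x, λ, z) = H_k(x, z, λ) for every k ≥ 0; equivalently, setting z = 1 after homogenizing and dehomogenizing with respect to λ returns the same bivariate polynomial: P_k(x, λ)|_{λ↔z} is symmetric under exchanging λ and z. -/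
open MvPolynomial

/-- Homogeneous version of `legendreF`. -/
noncomputable def legendreF3 : MvPolynomial (Fin 3) ℚ :=
  X 0 * (X 0 - X 2) * (X 0 - X 1)

/-- Homogeneous version of `inflP`. -/
noncomputable def inflH : ℕ → MvPolynomial (Fin 3) ℚ
  | 0 => C (1/2 : ℚ) * pderiv 0 legendreF3
  | k + 1 =>
      pderiv 0 (inflH k) * legendreF3 +
        C ((1/2 : ℚ) - (k : ℚ)) * (inflH k * pderiv 0 legendreF3)

/-- the dehomogenization map -/
noncomputable def deh : MvPolynomial (Fin 3) ℚ →ₐ[ℚ] MvPolynomial (Fin 2) ℚ :=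
  MvPolynomial.aeval ![X 0, X 1, 1]

lemma pderiv_isHomogeneous {σ : Type*} [DecidableEq σ] {p : MvPolynomial σ ℚ} {n : ℕ}
    (hp : p.IsHomogeneous n) (i : σ) : (pderiv i p).IsHomogeneous (n - 1) := by
  rw [p.as_sum, map_sum]
  apply IsHomogeneous.sum
  intro d hd
  rw [pderiv_monomial]
  by_cases h : d i = 0
  · rw [h]; simp [isHomogeneous_zero]
  · apply isHomogeneous_monomial
    have hdeg : d.degree = n := by
      by_contra hne
      exact mem_support_iff.mp hd (hp.coeff_eq_zero hne)
    have hle : Finsupp.single i 1 ≤ d := by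
      rwa [Finsupp.single_le_iff, Nat.one_le_iff_ne_zero]
    have hadd : (d - Finsupp.single i 1) + Finsupp.single i 1 = d :=
      tsub_add_cancel_of_le hle
    have hsing : (Finsupp.single i 1).degree = 1 := by
      simp [Finsupp.degree_apply, Finsupp.support_single_ne_zero i one_ne_zero]
    have := congrArg Finsupp.degree hadd
    rw [Finsupp.degree_eq_weight_one] at this hsing hdeg ⊢
    rw [map_add] at this
    omega

/-- restriction of an exponent vector to the first two variables -/
noncomputable def restr (m : Fin 3 →₀ ℕ) : Fin 2 →₀ ℕ :=
  Finsupp.equivFunOnFinite.symm ![m 0, m 1]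

lemma degree_fin3 (m : Fin 3 →₀ ℕ) : m.degree = m 0 + m 1 + m 2 := by
  have : m.degree = ∑ i : Fin 3, m i := by
    rw [Finsupp.degree]
    apply Finset.sum_subset (Finset.subset_univ _)
    intro i _ hi
    simpa using (Finsupp.notMem_support_iff.mp hi)
  rw [this, Fin.sum_univ_three]

lemma deh_monomial (m : Fin 3 →₀ ℕ) (c : ℚ) :
    deh (monomial m c) = monomial (restr m) c := by
  rw [deh, aeval_monomial, monomial_eq]
  rw [Finsupp.prod_fintype _ _ (fun i => pow_zero _),
    Finsupp.prod_fintype _ _ (fun i => pow_zero _)]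
  rw [Fin.prod_univ_three, Fin.prod_univ_two]
  simp [restr, algebraMap_eq]

lemma coeff_deh {H : MvPolynomial (Fin 3) ℚ} {n : ℕ} (hH : H.IsHomogeneous n)
    (m : Fin 3 →₀ ℕ) (hm : m.degree = n) :
    coeff (restr m) (deh H) = coeff m H := by
  conv_lhs => rw [H.as_sum, map_sum]
  have : ∀ m' : Fin 3 →₀ ℕ, deh (monomial m' (coeff m' H)) = monomial (restr m') (coeff m' H) :=
    fun m' => deh_monomial _ _
  rw [Finset.sum_congr rfl (fun m' _ => this m')]
  rw [MvPolynomial.coeff_sum]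
  simp_rw [coeff_monomial]
  rw [Finset.sum_congr rfl (fun m' hm' => ?_), Finset.sum_ite_eq' H.support m (fun m' => coeff m' H)]
  · split
    · rfl
    · next h => exact (MvPolynomial.notMem_support_iff.mp h).symm
  · congr 1
    simp only [eq_iff_iff]
    constructor
    · intro h
      have hdeg : m'.degree = n := by
        by_contra hne
        exact mem_support_iff.mp hm' (hH.coeff_eq_zero hne)
      have h0 : m' 0 = m 0 := by
        have := congrArg (fun f => f 0) h
        simpa [restr] using this
      have h1 : m' 1 = m 1 := by
        have := congrArg (fun f => f 1) h
        simpa [restr] using this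
      rw [degree_fin3] at hdeg
      rw [degree_fin3] at hm
      have h2 : m' 2 = m 2 := by omega
      ext i
      fin_cases i <;> assumption
    · intro h; rw [h]

lemma deh_injective_on_homog {n : ℕ} {H₁ H₂ : MvPolynomial (Fin 3) ℚ}
    (h1 : H₁.IsHomogeneous n) (h2 : H₂.IsHomogeneous n) (h : deh H₁ = deh H₂) :
    H₁ = H₂ := by
  ext m
  by_cases hm : m.degree = n
  · rw [← coeff_deh h1 m hm, ← coeff_deh h2 m hm, h]
  · rw [h1.coeff_eq_zero hm, h2.coeff_eq_zero hm]

lemma deh_pderiv (p : MvPolynomial (Fin 3) ℚ) :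
    deh (pderiv 0 p) = pderiv 0 (deh p) := by
  induction p using MvPolynomial.induction_on with
  | C a => simp [deh]
  | add p q hp hq => simp [map_add, hp, hq]
  | mul_X p i hp =>
    rw [pderiv_mul, map_add, map_mul, map_mul, hp, map_mul, pderiv_mul]
    congr 1
    congr 1
    fin_cases i <;> simp [deh]

lemma legendreF3_homog : legendreF3.IsHomogeneous 3 := by
  have h1 : (X 0 : MvPolynomial (Fin 3) ℚ).IsHomogeneous 1 := isHomogeneous_X _ _
  have h2 : ((X 0 - X 2 : MvPolynomial (Fin 3) ℚ)).IsHomogeneous 1 :=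
    (isHomogeneous_X _ _).sub (isHomogeneous_X _ _)
  have h3 : ((X 0 - X 1 : MvPolynomial (Fin 3) ℚ)).IsHomogeneous 1 :=
    (isHomogeneous_X _ _).sub (isHomogeneous_X _ _)
  have := (h1.mul h2).mul h3
  exact this

lemma inflH_homog (k : ℕ) : (inflH k).IsHomogeneous (2 * (k + 1)) := by
  induction k with
  | zero =>
    have := (pderiv_isHomogeneous legendreF3_homog 0).C_mul (1/2 : ℚ)
    exact this
  | succ k ih =>
    have ha : (pderiv 0 (inflH k) * legendreF3).IsHomogeneous (2 * (k + 1) - 1 + 3) :=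
      (pderiv_isHomogeneous ih 0).mul legendreF3_homog
    have hb : (inflH k * pderiv 0 legendreF3).IsHomogeneous (2 * (k + 1) + 2) :=
      ih.mul (pderiv_isHomogeneous legendreF3_homog 0)
    have h1 : 2 * (k + 1) - 1 + 3 = 2 * (k + 1 + 1) := by omega
    have h2 : 2 * (k + 1) + 2 = 2 * (k + 1 + 1) := by omega
    rw [h1] at ha
    rw [h2] at hb
    exact ha.add (hb.C_mul _)

lemma swap_zero : (Equiv.swap (1 : Fin 3) 2) 0 = 0 :=
  Equiv.swap_apply_of_ne_of_ne (by decide) (by decide)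

lemma rename_pderiv (p : MvPolynomial (Fin 3) ℚ) :
    rename (Equiv.swap (1 : Fin 3) 2) (pderiv 0 p) =
      pderiv 0 (rename (Equiv.swap (1 : Fin 3) 2) p) := by
  rw [← pderiv_rename (Equiv.swap (1 : Fin 3) 2).injective 0 p, swap_zero]

lemma rename_legendreF3 :
    rename (Equiv.swap (1 : Fin 3) 2) legendreF3 = legendreF3 := by
  simp only [legendreF3, map_mul, map_sub, rename_X, Equiv.swap_apply_left,
    Equiv.swap_apply_right, swap_zero]
  ring

lemma inflH_symm (k : ℕ) :
    rename (Equiv.swap (1 : Fin 3) 2) (inflH k) = inflH k := by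
  induction k with
  | zero =>
    show rename _ (C (1/2 : ℚ) * pderiv 0 legendreF3) = _
    rw [map_mul, rename_C, rename_pderiv, rename_legendreF3]
    rfl
  | succ k ih =>
    show rename _ (pderiv 0 (inflH k) * legendreF3 + _) = _
    rw [map_add, map_mul, map_mul, rename_C, map_mul, rename_pderiv, ih,
      rename_legendreF3, rename_pderiv, rename_legendreF3]
    rfl

lemma deh_legendreF3 : deh legendreF3 = legendreF := by
  simp [deh, legendreF3, legendreF]

lemma deh_C (c : ℚ) : deh (C c) = C c := by simp [deh, algebraMap_eq]

lemma deh_inflH (k : ℕ) : deh (inflH k) = inflP k := by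
  induction k with
  | zero =>
    show deh (C (1/2 : ℚ) * pderiv 0 legendreF3) = _
    rw [map_mul, deh_C, deh_pderiv, deh_legendreF3]
    rfl
  | succ k ih =>
    show deh (pderiv 0 (inflH k) * legendreF3 + _) = _
    rw [map_add, map_mul, map_mul, deh_C, map_mul, deh_pderiv, ih,
      deh_legendreF3, deh_pderiv, deh_legendreF3]
    rfl

/-- Symmetry of the homogenized inflection polynomials: if `H` is homogeneous of degree
`2(k+1)` in `(x, λ, z)` with `H(x, λ, 1) = P_k(x, λ)`, then `H(x, λ, z) = H(x, z, λ)`. -/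
theorem homog_symmetry (k : ℕ) (H : MvPolynomial (Fin 3) ℚ)
    (hH : H.IsHomogeneous (2 * (k + 1)))
    (hdeh : MvPolynomial.aeval ![X 0, X 1, 1] H = inflP k) :
    rename (Equiv.swap (1 : Fin 3) 2) H = H := by
  have hH' : H = inflH k := by
    apply deh_injective_on_homog hH (inflH_homog k)
    rw [deh_inflH]
    exact hdeh
  rw [hH', inflH_symm]
end

section
/- With P_k defined by P_0 = (1/2)∂_x(x(x-1)(x-λ)) and P_{k+1} = ∂_x(P_k)·f + (1/2-k)·P_k·∂_x f where f = x(x-1)(x-λ), one has for all k ≥ 0 the identity P_k(x+1, λ+1) = P_k(-x, -λ) in ℚ[x, λ]. -/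
/-! The map `(x, λ) ↦ (1 - x, 1 - λ)` reverses the sign of `∂ₓ` and of `f`, so the recursion
shows by induction that every `P_k` is invariant under it. Composing this invariance with
`(x, λ) ↦ (-x, -λ)` gives the translation `(x, λ) ↦ (x + 1, λ + 1)`. -/

open MvPolynomial

section ChainRule

variable {σ R : Type*} [CommSemiring R]

theorem pderiv_aeval_of_pderiv_eq_smul (s : σ → MvPolynomial σ R) (j : σ) (c : R)
    (hs : ∀ i, pderiv j (s i) = c • pderiv j (X i)) (p : MvPolynomial σ R) :
    pderiv j (aeval s p) = c • aeval s (pderiv j p) := by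
  induction p using MvPolynomial.induction_on with
  | C a => simp
  | add p q hp hq => simp only [map_add, hp, hq, smul_add]
  | mul_X p i hp =>
    have hXi : aeval s (pderiv j (X i : MvPolynomial σ R)) = pderiv j (X i) := by
      rcases eq_or_ne i j with rfl | hij
      · simp
      · simp [pderiv_X_of_ne hij]
    simp only [map_mul, aeval_X, pderiv_mul, map_add, hp, hs, hXi, smul_add, smul_mul_assoc,
      mul_smul_comm]

end ChainRule

noncomputable def legendreReflection : Fin 2 → MvPolynomial (Fin 2) ℚ :=
  ![1 - X 0, 1 - X 1]

theorem pderiv_aeval_legendreReflection (p : MvPolynomial (Fin 2) ℚ) :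
    pderiv 0 (aeval legendreReflection p) = -aeval legendreReflection (pderiv 0 p) := by
  rw [← neg_one_smul ℚ (aeval legendreReflection (pderiv 0 p))]
  refine pderiv_aeval_of_pderiv_eq_smul _ _ _ (fun i => ?_) p
  fin_cases i <;> simp [legendreReflection]

theorem aeval_legendreReflection_legendreF :
    aeval legendreReflection legendreF = -legendreF := by
  simp only [legendreF, legendreReflection, map_mul, map_sub, map_one, aeval_X,
    Matrix.cons_val_zero, Matrix.cons_val_one]
  ring

theorem aeval_legendreReflection_pderiv_legendreF :
    aeval legendreReflection (pderiv 0 legendreF) = pderiv 0 legendreF := by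
  have h := pderiv_aeval_legendreReflection legendreF
  rwa [aeval_legendreReflection_legendreF, map_neg, neg_inj, eq_comm] at h

theorem aeval_legendreReflection_inflP (k : ℕ) :
    aeval legendreReflection (inflP k) = inflP k := by
  induction k with
  | zero =>
    simp only [inflP, map_mul, aeval_C, algebraMap_eq, aeval_legendreReflection_pderiv_legendreF]
  | succ k ih =>
    have hderiv : aeval legendreReflection (pderiv 0 (inflP k)) = -pderiv 0 (inflP k) := by
      rw [← neg_neg (aeval _ _), ← pderiv_aeval_legendreReflection, ih]
    simp only [inflP, map_add, map_mul, aeval_C, algebraMap_eq, hderiv, ih,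
      aeval_legendreReflection_legendreF, aeval_legendreReflection_pderiv_legendreF]
    ring

/-- The second symmetry: `P_k(x+1, λ+1) = P_k(-x, -λ)`. -/
theorem inflP_translation_symmetry (k : ℕ) :
    MvPolynomial.aeval ![(X 0 : MvPolynomial (Fin 2) ℚ) + 1, X 1 + 1] (inflP k) =
      MvPolynomial.aeval ![-(X 0 : MvPolynomial (Fin 2) ℚ), -(X 1)] (inflP k) := by
  have htranslation : ![(X 0 : MvPolynomial (Fin 2) ℚ) + 1, X 1 + 1] =
      fun i => aeval ![-(X 0 : MvPolynomial (Fin 2) ℚ), -(X 1)] (legendreReflection i) := by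
    funext i
    fin_cases i <;> simp [legendreReflection, add_comm]
  rw [htranslation, ← aeval_bind₁, ← aeval_eq_bind₁, aeval_legendreReflection_inflP]
end
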